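/- arXiv:2108.13748 — 3 statements merged into one kernel-verified Lean document; each statement's English description precedes it below -/
import Mathlib

section
/- Let $\lambda: B \to \mathbb{C}$ be defined on a ball $B = B_\delta(0) \subset \mathbb{R}^d$ with $|\lambda(t)| \le 1$ and $|\lambda(t) - 1| \le b |t|^2 \log(1/|t|)$ for all $t \in B$ (with $b>0$, $\delta<1/2$), and suppose additionally that $|\lambda(t)| \le \exp(-c|t|^2\log(1/|t|))$ for all $t \in B$, for some $c>0$. Then for every $\beta \ge 0$ there is $C>0$ with $\int_{B} |t|^\beta |\lambda(t)|^n\, dt \le C\, (n \log n)^{-(d+\beta)/2}$ for all $n \ge 2$. -/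
open MeasureTheory Real

lemma aux_log_le_div_e {y : ℝ} (hy : 0 < y) : Real.log y ≤ y / Real.exp 1 := by
  have h := Real.log_le_sub_one_of_pos (show 0 < y / Real.exp 1 by positivity)
  rw [Real.log_div hy.ne' (Real.exp_ne_zero 1), Real.log_exp] at h
  linarith

lemma aux_gauss_int (d : ℕ) :
    Integrable (fun v : EuclideanSpace ℝ (Fin d) => Real.exp (-(1/2) * ‖v‖^2)) := by
  have h := (GaussianFourier.integrable_cexp_neg_mul_sq_norm_add
      (V := EuclideanSpace ℝ (Fin d)) (b := (1/2 : ℂ)) (by norm_num) 0 0).norm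
  convert h using 2 with v
  simp [Complex.norm_exp, ← Complex.ofReal_pow]

lemma aux_base_int (d : ℕ) (β : ℝ) (hβ : 0 ≤ β) :
    Integrable (fun x : EuclideanSpace ℝ (Fin d) => ‖x‖ ^ β * Real.exp (-‖x‖^2)) := by
  apply Integrable.mono' ((aux_gauss_int d).const_mul (Real.exp (β^2/2)))
  · apply Continuous.aestronglyMeasurable
    exact (continuous_norm.rpow_const (fun x => Or.inr hβ)).mul
      (Real.continuous_exp.comp (continuous_norm.pow 2).neg)
  · filter_upwards with x
    have h0 : (0:ℝ) ≤ ‖x‖ := norm_nonneg x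
    have h1 : (0:ℝ) ≤ ‖x‖ ^ β := Real.rpow_nonneg h0 β
    rw [Real.norm_eq_abs, abs_of_nonneg (by positivity)]
    rw [← Real.exp_add]
    have key : ‖x‖ ^ β ≤ Real.exp (β^2/2 + ‖x‖^2/2) := by
      rcases le_or_gt ‖x‖ 1 with h | h
      · calc ‖x‖ ^ β ≤ 1 := Real.rpow_le_one h0 h hβ
          _ ≤ _ := Real.one_le_exp (by positivity)
      · rw [Real.rpow_def_of_pos (by linarith)]
        apply Real.exp_le_exp.2
        have hlog : Real.log ‖x‖ ≤ ‖x‖ := by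
          have := Real.log_le_sub_one_of_pos (by linarith : (0:ℝ) < ‖x‖)
          linarith
        nlinarith [sq_nonneg (β - ‖x‖)]
    calc ‖x‖ ^ β * Real.exp (-‖x‖^2) ≤ Real.exp (β^2/2 + ‖x‖^2/2) * Real.exp (-‖x‖^2) := by
          apply mul_le_mul_of_nonneg_right key (Real.exp_nonneg _)
      _ = Real.exp (β^2/2 + -(1/2) * ‖x‖^2) := by rw [← Real.exp_add]; ring_nf

lemma aux_gauss_scaled (d : ℕ) (β : ℝ) (hβ : 0 ≤ β) :
    ∃ I : ℝ, 0 ≤ I ∧ ∀ a : ℝ, 0 < a →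
      Integrable (fun x : EuclideanSpace ℝ (Fin d) => ‖x‖ ^ β * Real.exp (-(a * ‖x‖^2))) ∧
      ∫ x : EuclideanSpace ℝ (Fin d), ‖x‖ ^ β * Real.exp (-(a * ‖x‖^2))
        = (a ^ (-(((d:ℝ) + β)/2))) * I := by
  set base := fun x : EuclideanSpace ℝ (Fin d) => ‖x‖ ^ β * Real.exp (-‖x‖^2) with hbase
  refine ⟨∫ x, base x, integral_nonneg (fun x => by positivity), fun a ha => ?_⟩
  set s := Real.sqrt a with hsdef
  have hs : 0 < s := Real.sqrt_pos.2 ha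
  have hsb : (0:ℝ) < s ^ β := Real.rpow_pos_of_pos hs β
  have hcomp : ∀ x : EuclideanSpace ℝ (Fin d),
      base (s • x) = s ^ β * (‖x‖ ^ β * Real.exp (-(a * ‖x‖^2))) := by
    intro x
    have hn : ‖s • x‖ = s * ‖x‖ := by
      rw [norm_smul, Real.norm_eq_abs, abs_of_pos hs]
    simp only [hbase, hn]
    rw [Real.mul_rpow hs.le (norm_nonneg x), mul_pow, Real.sq_sqrt ha.le]
    ring
  have hint : Integrable (fun x : EuclideanSpace ℝ (Fin d) => ‖x‖ ^ β * Real.exp (-(a * ‖x‖^2))) := by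
    have h1 : Integrable (fun x : EuclideanSpace ℝ (Fin d) => base (s • x)) :=
      (integrable_comp_smul_iff volume base hs.ne').2 (aux_base_int d β hβ)
    simp only [hcomp] at h1
    have h2 := h1.const_mul ((s ^ β)⁻¹)
    simp only [← mul_assoc, inv_mul_cancel₀ hsb.ne', one_mul] at h2
    exact h2
  refine ⟨hint, ?_⟩
  have hsub := MeasureTheory.Measure.integral_comp_smul (volume : Measure (EuclideanSpace ℝ (Fin d))) base s
  simp only [hcomp, finrank_euclideanSpace_fin] at hsub
  rw [MeasureTheory.integral_const_mul] at hsub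
  have hsd : (0:ℝ) < s ^ d := pow_pos hs d
  rw [abs_of_nonneg (inv_nonneg.2 hsd.le), smul_eq_mul] at hsub
  have key : ∫ x : EuclideanSpace ℝ (Fin d), ‖x‖ ^ β * Real.exp (-(a * ‖x‖^2))
      = (s ^ β)⁻¹ * ((s ^ d)⁻¹ * ∫ x, base x) := by
    field_simp at hsub ⊢
    linarith [hsub]
  rw [key]
  have h1 : s ^ β = a ^ (β/2) := by
    rw [hsdef, Real.sqrt_eq_rpow, ← Real.rpow_mul ha.le]
    congr 1; ring
  have h2 : s ^ d = a ^ ((d:ℝ)/2) := by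
    rw [hsdef, Real.sqrt_eq_rpow, ← Real.rpow_natCast (a ^ (1/2:ℝ)) d, ← Real.rpow_mul ha.le]
    congr 1; ring
  rw [h1, h2, ← Real.rpow_neg ha.le, ← Real.rpow_neg ha.le, ← mul_assoc, ← Real.rpow_add ha]
  congr 2
  ring

set_option maxHeartbeats 1000000 in
theorem stmt_8' (d : ℕ) (hd : 1 ≤ d) (δ b c : ℝ) (hδ0 : 0 < δ) (hδ : δ < 1 / 2)
    (hb : 0 < b) (hc : 0 < c)
    (lam : EuclideanSpace ℝ (Fin d) → ℂ)
    (hlam1 : ∀ t ∈ Metric.ball (0 : EuclideanSpace ℝ (Fin d)) δ, ‖lam t‖ ≤ 1)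
    (hlam3 : ∀ t ∈ Metric.ball (0 : EuclideanSpace ℝ (Fin d)) δ,
      ‖lam t‖ ≤ Real.exp (-(c * ‖t‖ ^ 2 * Real.log (1 / ‖t‖)))) :
    ∀ β : ℝ, 0 ≤ β → ∃ C > 0, ∀ n : ℕ, 2 ≤ n →
      ∫ t in Metric.ball (0 : EuclideanSpace ℝ (Fin d)) δ,
          ‖t‖ ^ β * ‖lam t‖ ^ n ≤
        C * ((n : ℝ) * Real.log n) ^ (-((d : ℝ) + β) / 2) := by
  intro β hβ
  obtain ⟨I, hI0, hI⟩ := aux_gauss_scaled d β hβ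
  set p : ℝ := ((d : ℝ) + β) / 2 with hp
  have hd1 : (1:ℝ) ≤ (d:ℝ) := by exact_mod_cast hd
  have hppos : 0 < p := by rw [hp]; linarith
  have hepos : (0:ℝ) < Real.exp 1 := Real.exp_pos 1
  have he2 : (2:ℝ) < Real.exp 1 := by
    have := Real.add_one_lt_exp (one_ne_zero); linarith
  set κ : ℝ := 1/2 - (Real.exp 1)⁻¹ with hκ
  have hκpos : 0 < κ := by
    have h1 : (Real.exp 1)⁻¹ < (2:ℝ)⁻¹ := by
      apply inv_strictAnti₀ (by norm_num) he2
    rw [hκ]; rw [one_div] at *; linarith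
  set Lδ : ℝ := Real.log (1/δ) with hLδ
  have hLδpos : 0 < Lδ := Real.log_pos ((one_lt_div hδ0).2 (by linarith))
  set c4 : ℝ := c * Lδ with hc4def
  have hc4 : 0 < c4 := mul_pos hc hLδpos
  set V : ℝ := (volume (Metric.ball (0 : EuclideanSpace ℝ (Fin d)) δ)).toReal with hV
  have hV0 : 0 ≤ V := ENNReal.toReal_nonneg
  have hκc : (0:ℝ) < κ * c := mul_pos hκpos hc
  set A : ℝ := I * (κ*c) ^ (-p) with hA
  set B : ℝ := V * δ ^ β * Real.exp (p^2/c4) with hB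
  have hA0 : 0 ≤ A := mul_nonneg hI0 (Real.rpow_nonneg hκc.le _)
  have hB0 : 0 ≤ B := by positivity
  have hCpos : (0:ℝ) < A + B + 1 := by linarith
  refine ⟨A + B + 1, hCpos, ?_⟩
  intro n hn
  have hn1 : (1:ℝ) < (n:ℝ) := by exact_mod_cast Nat.lt_of_lt_of_le one_lt_two hn
  have hn0 : (0:ℝ) < (n:ℝ) := by linarith
  have hlogn : 0 < Real.log n := Real.log_pos hn1
  have hnl : 0 < (n:ℝ) * Real.log n := mul_pos hn0 hlogn
  have hrp : (0:ℝ) < ((n:ℝ) * Real.log n) ^ (-((d : ℝ) + β) / 2) := Real.rpow_pos_of_pos hnl _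
  set an : ℝ := κ * c * ((n:ℝ) * Real.log n) with han
  have hanpos : 0 < an := mul_pos hκc hnl
  obtain ⟨hint_g, hval_g⟩ := hI an hanpos
  set Kn : ℝ := δ ^ β * Real.exp (-(c4 * (Real.log n)^2)) with hKn
  have hKn0 : 0 ≤ Kn := by positivity
  -- pointwise bound
  have hpt : ∀ t ∈ Metric.ball (0 : EuclideanSpace ℝ (Fin d)) δ,
      ‖t‖ ^ β * ‖lam t‖ ^ n
        ≤ ‖t‖ ^ β * Real.exp (-(an * ‖t‖^2)) + Kn := by
    intro t ht
    have htδ : ‖t‖ < δ := by rwa [Metric.mem_ball, dist_zero_right] at ht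
    rcases eq_or_ne t 0 with rfl | htne
    · simp only [norm_zero]
      have h1 : ‖lam 0‖ ^ n ≤ 1 :=
        pow_le_one₀ (norm_nonneg _) (hlam1 0 (by simpa [Metric.mem_ball] using hδ0))
      have h2 : (0:ℝ) ^ β * ‖lam 0‖ ^ n ≤ (0:ℝ) ^ β * 1 :=
        mul_le_mul_of_nonneg_left h1 (Real.rpow_nonneg le_rfl β)
      calc (0:ℝ) ^ β * ‖lam 0‖ ^ n ≤ (0:ℝ) ^ β * 1 := h2
        _ = (0:ℝ) ^ β * Real.exp (-(an * 0^2)) := by norm_num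
        _ ≤ _ := le_add_of_nonneg_right hKn0
    · have htpos : 0 < ‖t‖ := norm_pos_iff.2 htne
      set L : ℝ := Real.log (1/‖t‖) with hL
      have habs := hlam3 t ht
      have habsn : ‖lam t‖ ^ n ≤ Real.exp ((n:ℕ) * -(c * ‖t‖ ^ 2 * L)) := by
        rw [Real.exp_nat_mul]
        exact pow_le_pow_left₀ (norm_nonneg _) habs n
      rcases le_or_gt ‖t‖ (Real.log n / Real.sqrt n) with h | h
      · -- inner region
        have hsq : (0:ℝ) < Real.sqrt n := Real.sqrt_pos.2 hn0
        have hr : (0:ℝ) < Real.log n / Real.sqrt n := by positivity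
        have hlt : Real.log ‖t‖ ≤ Real.log (Real.log n / Real.sqrt n) :=
          Real.log_le_log htpos h
        have hld : Real.log (Real.log n / Real.sqrt n)
            = Real.log (Real.log n) - Real.log n / 2 := by
          rw [Real.log_div hlogn.ne' hsq.ne', Real.log_sqrt hn0.le]
        have hll : Real.log (Real.log n) ≤ Real.log n / Real.exp 1 :=
          aux_log_le_div_e hlogn
        have hLval : L = - Real.log ‖t‖ := by rw [hL, one_div, Real.log_inv]
        have hκl : κ * Real.log n = Real.log n / 2 - Real.log n * (Real.exp 1)⁻¹ := by
          rw [hκ]; ring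
        have hLlb : κ * Real.log n ≤ L := by
          rw [hLval, hκl]
          have : Real.log n / Real.exp 1 = Real.log n * (Real.exp 1)⁻¹ := by ring
          linarith [hlt.trans (le_of_eq hld), hll]
        have hexparg : (n:ℝ) * -(c * ‖t‖ ^ 2 * L) ≤ -(an * ‖t‖^2) := by
          have hmul : (κ * Real.log n) * (c * (n:ℝ) * ‖t‖^2) ≤ L * (c * (n:ℝ) * ‖t‖^2) :=
            mul_le_mul_of_nonneg_right hLlb (by positivity)
          calc (n:ℝ) * -(c * ‖t‖ ^ 2 * L) = -(L * (c * (n:ℝ) * ‖t‖^2)) := by ring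
            _ ≤ -((κ * Real.log n) * (c * (n:ℝ) * ‖t‖^2)) := neg_le_neg hmul
            _ = -(an * ‖t‖^2) := by rw [han]; ring
        calc ‖t‖ ^ β * ‖lam t‖ ^ n
            ≤ ‖t‖ ^ β * Real.exp ((n:ℕ) * -(c * ‖t‖ ^ 2 * L)) :=
              mul_le_mul_of_nonneg_left habsn (Real.rpow_nonneg htpos.le β)
          _ ≤ ‖t‖ ^ β * Real.exp (-(an * ‖t‖^2)) := by
              apply mul_le_mul_of_nonneg_left _ (Real.rpow_nonneg htpos.le β)
              exact Real.exp_le_exp.2 hexparg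
          _ ≤ _ := le_add_of_nonneg_right hKn0
      · -- outer region
        have hLlb : Lδ ≤ L := by
          rw [hLδ, hL]
          apply Real.log_le_log (by positivity)
          exact one_div_le_one_div_of_le htpos htδ.le
        have hnt2 : (Real.log n)^2 ≤ (n:ℝ) * ‖t‖^2 := by
          have h2 : (Real.log n / Real.sqrt n)^2 ≤ ‖t‖^2 :=
            pow_le_pow_left₀ (by positivity) h.le 2
          rw [div_pow, Real.sq_sqrt hn0.le] at h2
          calc (Real.log n)^2 = (Real.log n)^2 / (n:ℝ) * (n:ℝ) := by field_simp
            _ ≤ ‖t‖^2 * (n:ℝ) := mul_le_mul_of_nonneg_right h2 hn0.le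
            _ = (n:ℝ) * ‖t‖^2 := by ring
        have hexparg : (n:ℝ) * -(c * ‖t‖ ^ 2 * L) ≤ -(c4 * (Real.log n)^2) := by
          have hLpos : 0 < L := lt_of_lt_of_le hLδpos hLlb
          have k1 : Lδ * (Real.log n)^2 ≤ L * ((n:ℝ) * ‖t‖^2) :=
            mul_le_mul hLlb hnt2 (sq_nonneg _) hLpos.le
          calc (n:ℝ) * -(c * ‖t‖ ^ 2 * L) = -(c * (L * ((n:ℝ) * ‖t‖^2))) := by ring
            _ ≤ -(c * (Lδ * (Real.log n)^2)) :=
                neg_le_neg (mul_le_mul_of_nonneg_left k1 hc.le)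
            _ = -(c4 * (Real.log n)^2) := by rw [hc4def]; ring
        have hrδ : ‖t‖ ^ β ≤ δ ^ β := Real.rpow_le_rpow htpos.le htδ.le hβ
        have : ‖t‖ ^ β * ‖lam t‖ ^ n ≤ Kn := by
          rw [hKn]
          apply mul_le_mul hrδ (habsn.trans (Real.exp_le_exp.2 hexparg))
            (by positivity) (by positivity)
        exact this.trans (le_add_of_nonneg_left (by positivity))
  -- integral bound
  have hball : MeasurableSet (Metric.ball (0 : EuclideanSpace ℝ (Fin d)) δ) :=
    measurableSet_ball
  have hKint : IntegrableOn (fun _ : EuclideanSpace ℝ (Fin d) => Kn)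
      (Metric.ball (0 : EuclideanSpace ℝ (Fin d)) δ) volume :=
    integrableOn_const measure_ball_lt_top.ne
  have hmain : ∫ t in Metric.ball (0 : EuclideanSpace ℝ (Fin d)) δ,
      ‖t‖ ^ β * ‖lam t‖ ^ n ≤ an ^ (-p) * I + Kn * V := by
    by_cases hf : IntegrableOn
        (fun t : EuclideanSpace ℝ (Fin d) => ‖t‖ ^ β * ‖lam t‖ ^ n)
        (Metric.ball (0 : EuclideanSpace ℝ (Fin d)) δ) volume
    · have h1 : ∫ t in Metric.ball (0 : EuclideanSpace ℝ (Fin d)) δ,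
          ‖t‖ ^ β * ‖lam t‖ ^ n
          ≤ ∫ t in Metric.ball (0 : EuclideanSpace ℝ (Fin d)) δ,
            (‖t‖ ^ β * Real.exp (-(an * ‖t‖^2)) + Kn) :=
        setIntegral_mono_on hf (hint_g.integrableOn.add hKint) hball hpt
      have h2 : ∫ t in Metric.ball (0 : EuclideanSpace ℝ (Fin d)) δ,
          (‖t‖ ^ β * Real.exp (-(an * ‖t‖^2)) + Kn)
          = (∫ t in Metric.ball (0 : EuclideanSpace ℝ (Fin d)) δ,
              ‖t‖ ^ β * Real.exp (-(an * ‖t‖^2))) + Kn * V := by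
        rw [integral_add hint_g.integrableOn hKint, setIntegral_const, smul_eq_mul, measureReal_def, hV,
          mul_comm]
      have h3 : ∫ t in Metric.ball (0 : EuclideanSpace ℝ (Fin d)) δ,
          ‖t‖ ^ β * Real.exp (-(an * ‖t‖^2))
          ≤ ∫ t : EuclideanSpace ℝ (Fin d), ‖t‖ ^ β * Real.exp (-(an * ‖t‖^2)) :=
        setIntegral_le_integral hint_g (Filter.Eventually.of_forall (fun x => by positivity))
      have h4 : ∫ t : EuclideanSpace ℝ (Fin d), ‖t‖ ^ β * Real.exp (-(an * ‖t‖^2))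
          = an ^ (-p) * I := hval_g
      linarith
    · rw [integral_undef hf]
      positivity
  refine hmain.trans ?_
  -- final numeric bound
  have e1 : an ^ (-p) = (κ*c) ^ (-p) * ((n:ℝ) * Real.log n) ^ (-p) := by
    rw [han, Real.mul_rpow hκc.le hnl.le]
  have e2 : Real.exp (-(c4 * (Real.log n)^2))
      ≤ Real.exp (p^2/c4) * ((n:ℝ) * Real.log n) ^ (-p) := by
    have hle : (n:ℝ) * Real.log n ≤ (n:ℝ)^2 := by
      have h' : Real.log n ≤ (n:ℝ) := by
        have := Real.log_le_sub_one_of_pos hn0; linarith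
      calc (n:ℝ) * Real.log n ≤ (n:ℝ) * (n:ℝ) := mul_le_mul_of_nonneg_left h' hn0.le
        _ = (n:ℝ)^2 := (pow_two _).symm
    have hs1 : ((n:ℝ)^2) ^ (-p) ≤ ((n:ℝ) * Real.log n) ^ (-p) := by
      rw [Real.rpow_neg hnl.le, Real.rpow_neg (by positivity)]
      exact inv_anti₀ (Real.rpow_pos_of_pos hnl p)
        (Real.rpow_le_rpow hnl.le hle hppos.le)
    have hs2 : ((n:ℝ)^2) ^ (-p) = Real.exp (2 * Real.log n * (-p)) := by
      rw [Real.rpow_def_of_pos (by positivity), Real.log_pow]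
      norm_num
    have hs3 : Real.exp (-(c4 * (Real.log n)^2))
        ≤ Real.exp (p^2/c4) * Real.exp (2 * Real.log n * (-p)) := by
      rw [← Real.exp_add]
      apply Real.exp_le_exp.2
      have key : 0 ≤ c4 * (Real.log n)^2 - 2 * p * Real.log n + p^2/c4 := by
        have h := sq_nonneg (c4 * Real.log n - p)
        have : (c4 * Real.log n - p)^2 / c4 = c4 * (Real.log n)^2 - 2 * p * Real.log n + p^2/c4 := by
          field_simp; ring
        rw [← this]; positivity
      linarith
    calc Real.exp (-(c4 * (Real.log n)^2))
        ≤ Real.exp (p^2/c4) * Real.exp (2 * Real.log n * (-p)) := hs3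
      _ = Real.exp (p^2/c4) * ((n:ℝ)^2) ^ (-p) := by rw [hs2]
      _ ≤ Real.exp (p^2/c4) * ((n:ℝ) * Real.log n) ^ (-p) :=
          mul_le_mul_of_nonneg_left hs1 (Real.exp_nonneg _)
  have hrpeq : ((n:ℝ) * Real.log n) ^ (-((d : ℝ) + β) / 2)
      = ((n:ℝ) * Real.log n) ^ (-p) := by congr 1; rw [hp]; ring
  rw [hrpeq] at hrp ⊢
  have t1 : an ^ (-p) * I ≤ A * ((n:ℝ) * Real.log n) ^ (-p) := by
    rw [e1, hA]; exact le_of_eq (by ring)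
  have t2 : Kn * V ≤ B * ((n:ℝ) * Real.log n) ^ (-p) := by
    rw [hKn, hB]
    have hδβ : (0:ℝ) ≤ δ ^ β := Real.rpow_nonneg hδ0.le β
    calc δ ^ β * Real.exp (-(c4 * (Real.log n)^2)) * V
        ≤ δ ^ β * (Real.exp (p^2/c4) * ((n:ℝ) * Real.log n) ^ (-p)) * V := by
          apply mul_le_mul_of_nonneg_right (mul_le_mul_of_nonneg_left e2 hδβ) hV0
      _ = V * δ ^ β * Real.exp (p^2/c4) * ((n:ℝ) * Real.log n) ^ (-p) := by ring
  calc an ^ (-p) * I + Kn * V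
      ≤ A * ((n:ℝ) * Real.log n) ^ (-p) + B * ((n:ℝ) * Real.log n) ^ (-p) := by linarith
    _ = (A + B) * ((n:ℝ) * Real.log n) ^ (-p) := by ring
    _ ≤ (A + B + 1) * ((n:ℝ) * Real.log n) ^ (-p) :=
        mul_le_mul_of_nonneg_right (by linarith) hrp.le


/-- Corollary 4.3 specialised: if `|λ(t)| ≤ 1`, `|λ(t)-1| ≤ b|t|² log(1/|t|)` and additionally
`|λ(t)| ≤ exp(-c|t|² log(1/|t|))` on `B_δ(0) ⊂ ℝᵈ`, then for every `β ≥ 0` there is `C > 0` with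
`∫_{B_δ(0)} |t|^β |λ(t)|ⁿ dt ≤ C (n log n)^(-(d+β)/2)` for all `n ≥ 2`. -/
theorem stmt_8 (d : ℕ) (hd : 1 ≤ d) (δ b c : ℝ) (hδ0 : 0 < δ) (hδ : δ < 1 / 2)
    (hb : 0 < b) (hc : 0 < c)
    (lam : EuclideanSpace ℝ (Fin d) → ℂ)
    (hlam1 : ∀ t ∈ Metric.ball (0 : EuclideanSpace ℝ (Fin d)) δ, ‖lam t‖ ≤ 1)
    (hlam2 : ∀ t ∈ Metric.ball (0 : EuclideanSpace ℝ (Fin d)) δ,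
      ‖lam t - 1‖ ≤ b * ‖t‖ ^ 2 * Real.log (1 / ‖t‖))
    (hlam3 : ∀ t ∈ Metric.ball (0 : EuclideanSpace ℝ (Fin d)) δ,
      ‖lam t‖ ≤ Real.exp (-(c * ‖t‖ ^ 2 * Real.log (1 / ‖t‖)))) :
    ∀ β : ℝ, 0 ≤ β → ∃ C > 0, ∀ n : ℕ, 2 ≤ n →
      ∫ t in Metric.ball (0 : EuclideanSpace ℝ (Fin d)) δ,
          ‖t‖ ^ β * ‖lam t‖ ^ n ≤
        C * ((n : ℝ) * Real.log n) ^ (-((d : ℝ) + β) / 2) := by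
  exact stmt_8' d hd δ b c hδ0 hδ hb hc lam hlam1 hlam3
end

section
/- Let $c > 0$ and $d \ge 1$. There exists $C > 0$ such that for all $n \ge 2$, $\int_{\{t \in \mathbb{R}^d : |t| \le 1/2\}} \exp(-c\, n\, |t|^2 \log(1/|t|))\, dt \le C (n \log n)^{-d/2}$. -/
/-!
Split the ball at the radius `|t| = n^{-1/4}`. Inside it `log (1/|t|) ≥ (log n)/4`, so the integrand
is dominated by a Gaussian of variance `≍ 1/(n log n)`, whose integral is `O((n log n)^{-d/2})`.
Outside it `n |t|² ≥ √n` and `log (1/|t|) ≥ log 2`, so the integrand is at most `exp(-c log 2 √n)`,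
which decays faster than any power of `n`.
-/

open MeasureTheory Real
open scoped Nat

section Gaussian

variable {V : Type*} [NormedAddCommGroup V] [InnerProductSpace ℝ V] [FiniteDimensional ℝ V]
  [MeasurableSpace V] [BorelSpace V]

theorem integrable_rexp_neg_mul_sq_norm {a : ℝ} (ha : 0 < a) :
    Integrable fun v : V => rexp (-a * ‖v‖ ^ 2) :=
  .of_integral_ne_zero <| by
    rw [GaussianFourier.integral_rexp_neg_mul_sq_norm ha]
    positivity

theorem setIntegral_le_gaussian_add {s : Set V} (hs : MeasurableSet s) (hs' : volume s ≠ ⊤)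
    {f : V → ℝ} (hf : ∀ v, 0 ≤ f v) {a b : ℝ} (ha : 0 < a)
    (hfs : ∀ v ∈ s, f v ≤ rexp (-a * ‖v‖ ^ 2) + b) :
    ∫ v in s, f v ≤ (π / a) ^ (Module.finrank ℝ V / 2 : ℝ) + volume.real s * b := by
  have hg := integrable_rexp_neg_mul_sq_norm (V := V) ha
  have hb : IntegrableOn (fun _ => b) s := integrableOn_const hs'
  calc ∫ v in s, f v ≤ ∫ v in s, (rexp (-a * ‖v‖ ^ 2) + b) :=
        integral_mono_of_nonneg (.of_forall hf) (hg.integrableOn.add hb)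
          ((ae_restrict_iff' hs).2 (.of_forall hfs))
    _ = (∫ v in s, rexp (-a * ‖v‖ ^ 2)) + volume.real s * b := by
        rw [integral_add hg.integrableOn hb, setIntegral_const, smul_eq_mul]
    _ ≤ (∫ v, rexp (-a * ‖v‖ ^ 2)) + volume.real s * b :=
        add_le_add (setIntegral_le_integral hg (.of_forall fun _ => (exp_pos _).le)) le_rfl
    _ = (π / a) ^ (Module.finrank ℝ V / 2 : ℝ) + volume.real s * b := by
        rw [GaussianFourier.integral_rexp_neg_mul_sq_norm ha]

end Gaussian

theorem exp_neg_mul_sq_mul_log_inv_le {c N r : ℝ} (hc : 0 ≤ c) (hN : 0 < N) (hr0 : 0 ≤ r)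
    (hr : r ≤ 1 / 2) :
    rexp (-(c * N * r ^ 2 * log (1 / r))) ≤
      rexp (-(c / 4 * (N * log N)) * r ^ 2) + rexp (-(c * log 2) * √N) := by
  rcases hr0.eq_or_lt with rfl | hr0
  · simp [(exp_pos _).le]
  rcases le_or_gt (r ^ 4 * N) 1 with hsmall | hlarge
  · have hlog : log N ≤ 4 * log (1 / r) :=
      calc log N ≤ log ((1 / r) ^ 4) :=
            log_le_log hN (by rw [div_pow, one_pow, le_div_iff₀ (by positivity)]; linarith)
        _ = 4 * log (1 / r) := by rw [log_pow]; norm_num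
    refine le_add_of_le_of_nonneg (exp_le_exp.2 ?_) (exp_pos _).le
    have := mul_le_mul_of_nonneg_left hlog (by positivity : 0 ≤ c / 4 * N * r ^ 2)
    linarith
  · have hsqrt : √N ≤ N * r ^ 2 :=
      sqrt_le_iff.2 ⟨by positivity, by nlinarith⟩
    have hlog : log 2 ≤ log (1 / r) := log_le_log two_pos (by rw [le_div_iff₀ hr0]; linarith)
    refine le_add_of_nonneg_of_le (exp_pos _).le (exp_le_exp.2 ?_)
    have := mul_le_mul hsqrt hlog (log_pos one_lt_two).le (by positivity)
    nlinarith

theorem exp_neg_mul_sqrt_le_mul_rpow {κ N : ℝ} (hκ : 0 < κ) (hN : 1 < N) (k : ℕ) :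
    rexp (-κ * √N) ≤ (2 * k)! / κ ^ (2 * k) * (N * log N) ^ (-(k : ℝ) / 2) := by
  have hNL : 0 < N * log N := mul_pos (by linarith) (log_pos hN)
  have hpow : (N * log N) ^ ((k : ℝ) / 2) ≤ N ^ k :=
    calc (N * log N) ^ ((k : ℝ) / 2) ≤ (N ^ 2) ^ ((k : ℝ) / 2) := by
          gcongr
          nlinarith [log_le_sub_one_of_pos (by linarith : 0 < N)]
      _ = N ^ k := by
          rw [← rpow_natCast N 2, ← rpow_mul (by linarith), ← rpow_natCast N k]
          ring_nf
  -- the `2k`-th term of the exponential series of `κ √N` is `κ^{2k} N^k / (2k)!`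
  have hexp : κ ^ (2 * k) * N ^ k ≤ (2 * k)! * rexp (κ * √N) := by
    have := Real.pow_div_factorial_le_exp (κ * √N) (by positivity) (2 * k)
    rw [div_le_iff₀ (by positivity), mul_pow, pow_mul (√N), sq_sqrt (by linarith)] at this
    linarith
  rw [neg_div, rpow_neg hNL.le, neg_mul, exp_neg, ← div_eq_mul_inv, div_div,
    inv_le_iff_one_le_mul₀ (exp_pos _), div_mul_eq_mul_div, le_div_iff₀ (by positivity), one_mul]
  calc κ ^ (2 * k) * (N * log N) ^ ((k : ℝ) / 2) ≤ κ ^ (2 * k) * N ^ k := by gcongr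
    _ ≤ (2 * k)! * rexp (κ * √N) := hexp

theorem stmt_9_general (c : ℝ) (hc : 0 < c) (d : ℕ) :
    ∃ C > 0, ∀ n : ℕ, 2 ≤ n →
      ∫ t in Metric.closedBall (0 : EuclideanSpace ℝ (Fin d)) (1 / 2),
          Real.exp (-(c * n * ‖t‖ ^ 2 * Real.log (1 / ‖t‖))) ≤
        C * ((n : ℝ) * Real.log n) ^ (-(d : ℝ) / 2) := by
  set B := Metric.closedBall (0 : EuclideanSpace ℝ (Fin d)) (1 / 2)
  refine ⟨(4 * π / c) ^ ((d : ℝ) / 2) + volume.real B * ((2 * d)! / (c * log 2) ^ (2 * d)),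
    by positivity, fun n hn => ?_⟩
  have hn1 : (1 : ℝ) < n := by exact_mod_cast hn
  have hNL : 0 < n * log n := mul_pos (by linarith) (log_pos hn1)
  have hgauss : (π / (c / 4 * (n * log n))) ^ ((d : ℝ) / 2) =
      (4 * π / c) ^ ((d : ℝ) / 2) * (n * log n) ^ (-(d : ℝ) / 2) := by
    rw [show π / (c / 4 * (n * log n)) = 4 * π / c * (n * log n)⁻¹ by field_simp,
      mul_rpow (by positivity) (by positivity), inv_rpow hNL.le, ← rpow_neg hNL.le, neg_div]
  calc _ ≤ (π / (c / 4 * (n * log n))) ^ ((d : ℝ) / 2) +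
          volume.real B * rexp (-(c * log 2) * √n) := by
        simpa [finrank_euclideanSpace_fin] using
          setIntegral_le_gaussian_add (s := B) (a := c / 4 * (n * log n)) measurableSet_closedBall
            measure_closedBall_lt_top.ne (fun _ => (exp_pos _).le) (by positivity) fun t ht =>
              exp_neg_mul_sq_mul_log_inv_le hc.le (by linarith) (norm_nonneg t)
                (mem_closedBall_zero_iff.1 ht)
    _ ≤ (4 * π / c) ^ ((d : ℝ) / 2) * (n * log n) ^ (-(d : ℝ) / 2) + volume.real B *
          ((2 * d)! / (c * log 2) ^ (2 * d) * (n * log n) ^ (-(d : ℝ) / 2)) := by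
        rw [hgauss]
        gcongr
        exact exp_neg_mul_sqrt_le_mul_rpow (by positivity) hn1 d
    _ = _ := by ring

/-- Key integral estimate: for `c > 0`, `d ≥ 1` there is `C > 0` such that for all `n ≥ 2`,
`∫_{|t| ≤ 1/2} exp(-c n |t|² log(1/|t|)) dt ≤ C (n log n)^(-d/2)`. -/
theorem stmt_9 (c : ℝ) (hc : 0 < c) (d : ℕ) (hd : 1 ≤ d) :
    ∃ C > 0, ∀ n : ℕ, 2 ≤ n →
      ∫ t in Metric.closedBall (0 : EuclideanSpace ℝ (Fin d)) (1 / 2),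
          Real.exp (-(c * n * ‖t‖ ^ 2 * Real.log (1 / ‖t‖))) ≤
        C * ((n : ℝ) * Real.log n) ^ (-(d : ℝ) / 2) :=
  stmt_9_general c hc d
end

section
/- Let $\mu$ be a probability measure, $\kappa_\sigma \in L^1$ real(or $\mathbb{R}^d$)-valued with $\int \kappa_\sigma\, d\mu = 0$, and suppose $\psi := |\kappa_\sigma|$ satisfies $\mu(\psi > n) \le C n^{-2}$ for $n \ge 1$. Then there exist $C', \delta > 0$ such that for all $t \in \mathbb{R}^d$ with $0 < |t| < \delta$: $\left| \int e^{i t \cdot \kappa_\sigma}\, d\mu - 1 \right| \le C' |t|^2 \log(1/|t|)$. -/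
/-! Since `∫ ⟪t, κ⟫ dμ = 0`, the quantity to bound is `∫ (e^{ix} - 1 - ix) dμ` with `x = ⟪t, κ⟫`,
whose integrand is at most `2 φ(|x|) ≤ 2 φ(|t| ψ)` for `φ s = min (s², s)`. Telescoping `φ(|t| ψ)`
over the integers `k < ψ` turns its expectation into `∑ₖ (φ(|t|(k+1)) - φ(|t|k)) μ(ψ > k)`. The
increments are `O(|t|² k)` for `k ≤ 1/|t|` and `O(|t|)` beyond, so against the tail `C/k²` the first
range is a harmonic sum `O(|t|² log(1/|t|))` and the second is `O(|t|²)`. -/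

open MeasureTheory Finset Complex

theorem Complex.norm_exp_I_mul_ofReal_sub_one_sub_le (x : ℝ) :
    ‖exp (I * x) - 1 - I * x‖ ≤ 2 * min (x ^ 2) |x| := by
  have hIx : ‖I * (x : ℂ)‖ = |x| := by simp
  rcases le_or_gt |x| 1 with hx | hx
  · have h := Complex.norm_exp_sub_one_sub_id_le (x := I * x) (hIx.le.trans hx)
    rw [hIx, sq_abs] at h
    have : x ^ 2 ≤ |x| := by nlinarith [abs_nonneg x, sq_abs x]
    rw [min_eq_left this]
    linarith [sq_nonneg x]
  · have h1 : ‖exp (I * x) - 1‖ ≤ |x| := Real.norm_exp_I_mul_ofReal_sub_one_le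
    have : |x| ≤ x ^ 2 := by nlinarith [abs_nonneg x, sq_abs x]
    rw [min_eq_right this]
    calc ‖exp (I * x) - 1 - I * x‖ ≤ ‖exp (I * x) - 1‖ + ‖I * (x : ℂ)‖ := norm_sub_le _ _
      _ ≤ 2 * |x| := by rw [hIx]; linarith

theorem monotone_min_sq_self : Monotone fun s : ℝ => min (s ^ 2) s := by
  intro s t hst
  simp only [le_min_iff]
  rcases le_or_gt s 0 with hs | hs
  · exact ⟨(min_le_right _ _).trans (hs.trans (sq_nonneg t)), (min_le_right _ _).trans hst⟩
  · exact ⟨(min_le_left _ _).trans (by nlinarith), (min_le_right _ _).trans hst⟩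

theorem min_sq_self_sub_le {s t : ℝ} (hs : 0 ≤ s) :
    min (t ^ 2) t - min (s ^ 2) s ≤ if s ≤ 1 then t ^ 2 - s ^ 2 else t - s := by
  split_ifs with h
  · rw [min_eq_left (show s ^ 2 ≤ s by nlinarith)]; linarith [min_le_left (t ^ 2) t]
  · rw [min_eq_right (show s ≤ s ^ 2 by nlinarith)]; linarith [min_le_right (t ^ 2) t]

theorem Monotone.le_add_sum_range_ceil {f : ℝ → ℝ} (hf : Monotone f) (u : ℝ) :
    f u ≤ f 0 + ∑ k ∈ range ⌈u⌉₊, (f (k + 1) - f k) := by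
  have h := sum_range_sub (fun k : ℕ => f k) ⌈u⌉₊
  push_cast at h
  rw [h, add_sub_cancel]
  exact hf (Nat.le_ceil u)

theorem MeasureTheory.lintegral_ofReal_comp_le_tsum {Y : Type*} [MeasurableSpace Y]
    {μ : Measure Y} {f : ℝ → ℝ} (hf : Monotone f) {ψ : Y → ℝ} (hψ : AEMeasurable ψ μ) :
    ∫⁻ y, ENNReal.ofReal (f (ψ y)) ∂μ ≤
      ENNReal.ofReal (f 0) * μ Set.univ +
        ∑' k : ℕ, ENNReal.ofReal (f (k + 1) - f k) * μ {y | (k : ℝ) < ψ y} := by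
  have hinc : ∀ k : ℕ, 0 ≤ f (k + 1) - f k := fun k => sub_nonneg.2 (hf (by linarith))
  have hset : ∀ k : ℕ, NullMeasurableSet {y | (k : ℝ) < ψ y} μ :=
    fun k => nullMeasurableSet_lt aemeasurable_const hψ
  have hpt : ∀ y, ENNReal.ofReal (f (ψ y)) ≤ ENNReal.ofReal (f 0) +
      ∑' k : ℕ, {y | (k : ℝ) < ψ y}.indicator (fun _ => ENNReal.ofReal (f (k + 1) - f k)) y := by
    intro y
    calc ENNReal.ofReal (f (ψ y))
        ≤ ENNReal.ofReal (f 0) + ∑ k ∈ range ⌈ψ y⌉₊, ENNReal.ofReal (f (k + 1) - f k) := by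
          rw [← ENNReal.ofReal_sum_of_nonneg fun k _ => hinc k]
          exact (ENNReal.ofReal_le_ofReal (hf.le_add_sum_range_ceil _)).trans ENNReal.ofReal_add_le
      _ = ENNReal.ofReal (f 0) + ∑ k ∈ range ⌈ψ y⌉₊,
            {y | (k : ℝ) < ψ y}.indicator (fun _ => ENNReal.ofReal (f (k + 1) - f k)) y := by
          congr 1
          refine sum_congr rfl fun k hk => ?_
          have hy : y ∈ {y | (k : ℝ) < ψ y} := Nat.lt_ceil.1 (mem_range.1 hk)
          rw [Set.indicator_of_mem hy]
      _ ≤ _ := by gcongr; exact ENNReal.sum_le_tsum _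
  calc ∫⁻ y, ENNReal.ofReal (f (ψ y)) ∂μ
      ≤ ∫⁻ y, (ENNReal.ofReal (f 0) +
          ∑' k : ℕ, {y | (k : ℝ) < ψ y}.indicator (fun _ => ENNReal.ofReal (f (k + 1) - f k)) y)
          ∂μ :=
        lintegral_mono hpt
    _ = _ := by
      rw [lintegral_add_left measurable_const, lintegral_const,
        lintegral_tsum fun k => aemeasurable_const.indicator₀ (hset k)]
      simp_rw [lintegral_indicator_const₀ (hset _)]

theorem sum_range_filter_inv_succ_le {a : ℝ} (ha : 0 < a) (ha1 : a ≤ 1) (N : ℕ) :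
    ∑ k ∈ range N with a * (((k : ℕ) : ℝ) + 1) ≤ 1, (((k : ℕ) : ℝ) + 1)⁻¹ ≤
      1 + Real.log (1 / a) := by
  set M := ⌊1 / a⌋₊
  have hM : 1 ≤ M := Nat.le_floor (by rw [Nat.cast_one, le_div_iff₀ ha]; linarith)
  have hsub : {k ∈ range N | a * (((k : ℕ) : ℝ) + 1) ≤ 1} ⊆ range M := fun k hk => by
    have hk1 : ((k + 1 : ℕ) : ℝ) ≤ 1 / a := by
      rw [le_div_iff₀ ha]; push_cast; linarith [(mem_filter.1 hk).2]
    exact mem_range.2 (Nat.le_floor hk1)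
  calc ∑ k ∈ range N with a * (((k : ℕ) : ℝ) + 1) ≤ 1, (((k : ℕ) : ℝ) + 1)⁻¹
      ≤ ∑ k ∈ range M, (((k : ℕ) : ℝ) + 1)⁻¹ :=
        sum_le_sum_of_subset_of_nonneg hsub fun _ _ _ => by positivity
    _ = harmonic M := by simp [harmonic]
    _ ≤ 1 + Real.log M := harmonic_le_one_add_log M
    _ ≤ 1 + Real.log (1 / a) := by
      gcongr
      exact Nat.floor_le (by positivity)

theorem sum_range_filter_inv_succ_sq_le {a : ℝ} (ha : 0 < a) (N : ℕ) :
    ∑ k ∈ range N with 1 < a * (((k : ℕ) : ℝ) + 1), ((((k : ℕ) : ℝ) + 1) ^ 2)⁻¹ ≤ 2 * a := by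
  set M := ⌊1 / a⌋₊
  set S := {k ∈ range N | 1 < a * (((k : ℕ) : ℝ) + 1)}
  have hsub : S.image (fun k : ℕ => k + 1) ⊆ Ioo M (N + 1) := by
    intro j hj
    obtain ⟨k, hk, rfl⟩ := mem_image.1 hj
    obtain ⟨hkN, hak⟩ := mem_filter.1 hk
    have hMk : (M : ℝ) < k + 1 :=
      (Nat.floor_le (by positivity)).trans_lt (by rw [div_lt_iff₀ ha]; linarith)
    have : M < k + 1 := by exact_mod_cast hMk
    simp only [mem_Ioo, mem_range] at hkN ⊢
    omega
  have hMa : 1 / ((M : ℝ) + 1) ≤ a := by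
    rw [div_le_iff₀ (by positivity), mul_comm, ← div_le_iff₀ ha]
    exact (Nat.lt_floor_add_one _).le
  calc ∑ k ∈ range N with 1 < a * (((k : ℕ) : ℝ) + 1), ((((k : ℕ) : ℝ) + 1) ^ 2)⁻¹
      = ∑ j ∈ S.image (fun k : ℕ => k + 1), (((j : ℕ) : ℝ) ^ 2)⁻¹ := by
        rw [sum_image fun _ _ _ _ h => by simpa using h]
        push_cast
        rfl
    _ ≤ ∑ j ∈ Ioo M (N + 1), ((j : ℝ) ^ 2)⁻¹ :=
        sum_le_sum_of_subset_of_nonneg hsub fun _ _ _ => by positivity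
    _ ≤ 2 / (M + 1) := sum_Ioo_inv_sq_le M (N + 1)
    _ ≤ 2 * a := by rw [← mul_one_div]; linarith

noncomputable def tailWeight (a C : ℝ) (k : ℕ) : ℝ :=
  if a * ((k : ℝ) + 1) ≤ 1 then 3 * a ^ 2 * C / ((k : ℝ) + 1) else a * C / ((k : ℝ) + 1) ^ 2

theorem tailWeight_nonneg {a C : ℝ} (ha : 0 ≤ a) (hC : 0 ≤ C) (k : ℕ) : 0 ≤ tailWeight a C k := by
  unfold tailWeight; split_ifs <;> positivity

theorem sum_range_tailWeight_le {a C : ℝ} (ha : 0 < a) (ha1 : a ≤ 1) (hC : 0 ≤ C) (N : ℕ) :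
    ∑ k ∈ range N, tailWeight a C k ≤ a ^ 2 * C * (5 + 3 * Real.log (1 / a)) := by
  set L := Real.log (1 / a)
  simp only [tailWeight, div_eq_mul_inv]
  rw [sum_ite, ← mul_sum, ← mul_sum]
  have h1 := mul_le_mul_of_nonneg_left (sum_range_filter_inv_succ_le ha ha1 N)
    (by positivity : 0 ≤ 3 * a ^ 2 * C)
  have h2 := mul_le_mul_of_nonneg_left (sum_range_filter_inv_succ_sq_le ha N)
    (by positivity : 0 ≤ a * C)
  simp only [not_le]
  linarith

theorem min_sq_self_increment_mul_le {a C : ℝ} (ha : 0 < a) (hC : 0 ≤ C) (k : ℕ) :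
    (min ((a * (k + 1 + 1)) ^ 2) (a * (k + 1 + 1)) - min ((a * (k + 1)) ^ 2) (a * (k + 1))) *
      (C / ((k : ℝ) + 1) ^ 2) ≤ tailWeight a C k := by
  have hT : 0 ≤ C / ((k : ℝ) + 1) ^ 2 := by positivity
  have hinc := min_sq_self_sub_le (t := a * (k + 1 + 1)) (by positivity : 0 ≤ a * (k + 1))
  unfold tailWeight
  split_ifs at hinc ⊢ with h
  · calc _ ≤ ((a * (k + 1 + 1)) ^ 2 - (a * (k + 1)) ^ 2) * (C / ((k : ℝ) + 1) ^ 2) :=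
          mul_le_mul_of_nonneg_right hinc hT
      _ = a ^ 2 * C * (2 * k + 3) / ((k : ℝ) + 1) ^ 2 := by ring
      _ ≤ a ^ 2 * C * (3 * (k + 1)) / ((k : ℝ) + 1) ^ 2 := by gcongr; linarith
      _ = 3 * a ^ 2 * C / ((k : ℝ) + 1) := by field_simp
  · calc _ ≤ (a * (k + 1 + 1) - a * (k + 1)) * (C / ((k : ℝ) + 1) ^ 2) :=
          mul_le_mul_of_nonneg_right hinc hT
      _ = a * C / ((k : ℝ) + 1) ^ 2 := by ring

theorem tsum_ofReal_min_sq_sub_mul_le {a C : ℝ} (ha : 0 < a) (ha1 : a ≤ 1) (hC : 0 ≤ C)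
    {T : ℕ → ENNReal} (hT0 : T 0 ≤ 1) (hT : ∀ n : ℕ, 1 ≤ n → T n ≤ ENNReal.ofReal (C / n ^ 2)) :
    ∑' k : ℕ, ENNReal.ofReal (min ((a * (k + 1)) ^ 2) (a * (k + 1)) - min ((a * k) ^ 2) (a * k)) *
      T k ≤ ENNReal.ofReal (a ^ 2 * (1 + C * (5 + 3 * Real.log (1 / a)))) := by
  have hinc : ∀ x : ℝ, 0 ≤ x →
      0 ≤ min ((a * (x + 1)) ^ 2) (a * (x + 1)) - min ((a * x) ^ 2) (a * x) :=
    fun x hx => sub_nonneg.2 (monotone_min_sq_self (by nlinarith))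
  rw [tsum_eq_zero_add' ENNReal.summable]
  have hzero : ENNReal.ofReal (min ((a * ((0 : ℕ) + 1)) ^ 2) (a * ((0 : ℕ) + 1)) -
      min ((a * (0 : ℕ)) ^ 2) (a * (0 : ℕ))) * T 0 ≤ ENNReal.ofReal (a ^ 2) := by
    refine (mul_le_of_le_one_right' hT0).trans (ENNReal.ofReal_le_ofReal ?_)
    rw [Nat.cast_zero, zero_add, mul_one, mul_zero, min_eq_left (by nlinarith)]
    simp
  have hterm : ∀ k : ℕ, ENNReal.ofReal (min ((a * ((k + 1 : ℕ) + 1)) ^ 2) (a * ((k + 1 : ℕ) + 1)) -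
      min ((a * (k + 1 : ℕ)) ^ 2) (a * (k + 1 : ℕ))) * T (k + 1) ≤
        ENNReal.ofReal (tailWeight a C k) := by
    intro k
    refine (mul_le_mul_right (hT (k + 1) (by omega)) _).trans ?_
    rw [← ENNReal.ofReal_mul (hinc _ (by positivity))]
    refine ENNReal.ofReal_le_ofReal ?_
    push_cast
    exact min_sq_self_increment_mul_le ha hC k
  have hrest : ∑' k : ℕ, ENNReal.ofReal (tailWeight a C k) ≤
      ENNReal.ofReal (a ^ 2 * C * (5 + 3 * Real.log (1 / a))) := by
    refine ENNReal.tsum_le_of_sum_range_le fun N => ?_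
    rw [← ENNReal.ofReal_sum_of_nonneg fun k _ => tailWeight_nonneg ha.le hC k]
    exact ENNReal.ofReal_le_ofReal (sum_range_tailWeight_le ha ha1 hC N)
  calc _ ≤ ENNReal.ofReal (a ^ 2) + ENNReal.ofReal (a ^ 2 * C * (5 + 3 * Real.log (1 / a))) :=
        add_le_add hzero ((ENNReal.tsum_le_tsum hterm).trans hrest)
    _ = _ := by
      have hL : 0 ≤ Real.log (1 / a) := Real.log_nonneg (by rw [le_div_iff₀ ha]; linarith)
      rw [← ENNReal.ofReal_add (by positivity) (by positivity)]
      ring_nf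

theorem MeasureTheory.integral_exp_I_mul_sub_one {Y : Type*} [MeasurableSpace Y] {μ : Measure Y}
    [IsProbabilityMeasure μ] {X : Y → ℝ} (hX : Integrable X μ) (hmean : ∫ y, X y ∂μ = 0) :
    ∫ y, exp (I * X y) ∂μ - 1 = ∫ y, (exp (I * X y) - 1 - I * X y) ∂μ := by
  have hexp : Integrable (fun y => exp (I * X y)) μ := by
    refine Integrable.of_bound ?_ 1 (ae_of_all _ fun y => ?_)
    · exact (continuous_exp.comp (continuous_const.mul continuous_ofReal)).comp_aestronglyMeasurable
        hX.aestronglyMeasurable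
    · rw [norm_exp_I_mul_ofReal]
  have hIX : ∫ y, I * X y ∂μ = 0 := by
    rw [integral_const_mul, integral_complex_ofReal, hmean, ofReal_zero, mul_zero]
  have hexp_sub : Integrable (fun y => exp (I * X y) - 1) μ := hexp.sub (integrable_const 1)
  have hIX_int : Integrable (fun y => I * (X y : ℂ)) μ := hX.ofReal.const_mul I
  rw [integral_sub hexp_sub hIX_int, integral_sub hexp (integrable_const 1), hIX,
    integral_const, probReal_univ, sub_zero, one_smul]

theorem MeasureTheory.enorm_integral_exp_I_mul_inner_sub_one_le {Y E : Type*} [MeasurableSpace Y]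
    {μ : Measure Y} [IsProbabilityMeasure μ] [NormedAddCommGroup E] [InnerProductSpace ℝ E]
    [CompleteSpace E] {κ : Y → E} (hκint : Integrable κ μ) (hκmean : ∫ y, κ y ∂μ = 0) (t : E) :
    ‖∫ y, exp (I * (inner ℝ t (κ y) : ℝ)) ∂μ - 1‖ₑ ≤
      2 * ∫⁻ y, ENNReal.ofReal (min ((‖t‖ * ‖κ y‖) ^ 2) (‖t‖ * ‖κ y‖)) ∂μ := by
  have hmean : ∫ y, inner ℝ t (κ y) ∂μ = 0 := by
    rw [integral_inner hκint, hκmean, inner_zero_right]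
  rw [integral_exp_I_mul_sub_one (hκint.const_inner t) hmean,
    ← lintegral_const_mul' _ _ ENNReal.ofNat_ne_top]
  refine (enorm_integral_le_lintegral_enorm _).trans (lintegral_mono fun y => ?_)
  rw [← ofReal_norm, ← ENNReal.ofReal_ofNat 2, ← ENNReal.ofReal_mul zero_le_two]
  refine ENNReal.ofReal_le_ofReal ((norm_exp_I_mul_ofReal_sub_one_sub_le _).trans ?_)
  rw [← sq_abs]
  exact mul_le_mul_of_nonneg_left (monotone_min_sq_self (abs_real_inner_le_norm t (κ y)))
    zero_le_two

theorem stmt_14_general {Y : Type*} [MeasurableSpace Y] (μ : Measure Y) [IsProbabilityMeasure μ]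
    (d : ℕ) (κ : Y → EuclideanSpace ℝ (Fin d))
    (hκint : Integrable κ μ) (hκmean : ∫ y, κ y ∂μ = 0)
    (C : ℝ) (hC : 0 < C)
    (htail : ∀ n : ℕ, 1 ≤ n → μ {y | (n : ℝ) < ‖κ y‖} ≤ ENNReal.ofReal (C / (n : ℝ) ^ 2)) :
    ∃ C' > 0, ∃ δ > 0, ∀ t : EuclideanSpace ℝ (Fin d), 0 < ‖t‖ → ‖t‖ < δ →
      ‖(∫ y, Complex.exp (Complex.I * ((inner ℝ t (κ y) : ℝ) : ℂ)) ∂μ) - 1‖ ≤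
        C' * ‖t‖ ^ 2 * Real.log (1 / ‖t‖) := by
  refine ⟨2 * (1 + 8 * C), by positivity, Real.exp (-1), Real.exp_pos _, fun t ht0 htδ => ?_⟩
  set a := ‖t‖
  have ha1 : a ≤ 1 := htδ.le.trans (Real.exp_le_one_iff.2 (by norm_num))
  have hL : 1 ≤ Real.log (1 / a) := by
    have := Real.log_lt_log ht0 htδ
    rw [Real.log_exp] at this
    rw [one_div, Real.log_inv]
    linarith
  have hlayer := lintegral_ofReal_comp_le_tsum (μ := μ)
    (monotone_min_sq_self.comp (monotone_mul_left_of_nonneg ht0.le))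
    hκint.aestronglyMeasurable.norm.aemeasurable
  simp only [Function.comp_apply, mul_zero, ne_eq, OfNat.ofNat_ne_zero, not_false_eq_true,
    zero_pow, min_self, ENNReal.ofReal_zero, zero_mul, zero_add] at hlayer
  have htsum := tsum_ofReal_min_sq_sub_mul_le ht0 ha1 hC.le
    (T := fun k => μ {y | (k : ℝ) < ‖κ y‖}) prob_le_one htail
  calc _ ≤ 2 * (a ^ 2 * (1 + C * (5 + 3 * Real.log (1 / a)))) := by
        rw [← ENNReal.ofReal_le_ofReal_iff (by positivity), ENNReal.ofReal_mul zero_le_two,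
          ENNReal.ofReal_ofNat, ofReal_norm]
        exact (enorm_integral_exp_I_mul_inner_sub_one_le hκint hκmean t).trans
          (mul_le_mul_right (hlayer.trans htsum) 2)
    _ ≤ 2 * (1 + 8 * C) * a ^ 2 * Real.log (1 / a) := by
        nlinarith [mul_nonneg (mul_nonneg hC.le (sq_nonneg a)) (sub_nonneg.2 hL), sq_nonneg a]

/-- Proposition 5.9(b): if `κ_σ` is mean-zero and `ψ = |κ_σ|` has tails `μ(ψ > n) ≤ C n⁻²`,
then `|∫ e^{it·κ_σ} dμ - 1| ≤ C' |t|² log(1/|t|)` for small `t ≠ 0`. -/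
theorem stmt_14 {Y : Type*} [MeasurableSpace Y] (μ : Measure Y) [IsProbabilityMeasure μ]
    (d : ℕ) (hd : 1 ≤ d) (κ : Y → EuclideanSpace ℝ (Fin d))
    (hκint : Integrable κ μ) (hκmean : ∫ y, κ y ∂μ = 0)
    (C : ℝ) (hC : 0 < C)
    (htail : ∀ n : ℕ, 1 ≤ n → μ {y | (n : ℝ) < ‖κ y‖} ≤ ENNReal.ofReal (C / (n : ℝ) ^ 2)) :
    ∃ C' > 0, ∃ δ > 0, ∀ t : EuclideanSpace ℝ (Fin d), 0 < ‖t‖ → ‖t‖ < δ →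
      ‖(∫ y, Complex.exp (Complex.I * ((inner ℝ t (κ y) : ℝ) : ℂ)) ∂μ) - 1‖ ≤
        C' * ‖t‖ ^ 2 * Real.log (1 / ‖t‖) :=
  stmt_14_general μ d κ hκint hκmean C hC htail
end
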